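/- arXiv:2412.05750 — 4 statements merged into one kernel-verified Lean document; each statement's English description precedes it below -/
import Mathlib

section
/- Suppose that for every integer v ≥ 2, all integers x, y with 1 < x < y ≤ ⌊v/2⌋ and gcd(v,x) = gcd(v,y) = 1, and all integers a, b, c ≥ 1 with a + b + c = v − 1 and a ≥ max(b, c), the multiset {1^a, x^b, y^c} is realizable. Then for every integer v ≥ 2, every multiset L of size v − 1 whose support consists of exactly three elements, all lying in {1, …, ⌊v/2⌋} and all coprime to v, is realizable. -/
/-! Multiplication by a unit `u` of `ZMod v` permutes the vertices of `K_v` and sends an edge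
of length `d` to one of length `min(ud mod v, v - ud mod v)`, so it maps realizable multisets to
realizable multisets. If `s` is the most frequent length of `L`, scaling by `s⁻¹` turns `L` into
a multiset `{1^a, x^b, y^c}` with `a ≥ max(b, c)`, realizable by hypothesis, and scaling back by
`s` recovers `L`. -/

/-- The multiset of absolute differences of consecutive entries of a list of naturals. -/
def linDiffs (l : List ℕ) : Multiset ℕ :=
  ↑(List.zipWith (fun a b => (a - b) + (b - a)) l l.tail)

/-- `l` is a linear realization of the multiset `L`: it lists `0, …, |L|`
(each exactly once) and its consecutive absolute differences form `L`. -/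
def IsLinearRealization (L : Multiset ℕ) (l : List ℕ) : Prop :=
  l.Perm (List.range (Multiset.card L + 1)) ∧ linDiffs l = L

def HasLinearRealization (L : Multiset ℕ) : Prop :=
  ∃ l : List ℕ, IsLinearRealization L l

/-- A standard linear realization starts at `0`. -/
def HasStandardLinearRealization (L : Multiset ℕ) : Prop :=
  ∃ l : List ℕ, IsLinearRealization L l ∧ l.head? = some 0

/-- A perfect linear realization starts at `0` and ends at `v - 1 = |L|`. -/
def HasPerfectLinearRealization (L : Multiset ℕ) : Prop :=
  ∃ l : List ℕ, IsLinearRealization L l ∧ l.head? = some 0 ∧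
    l.getLast? = some (Multiset.card L)

/-- The multiset of cyclic edge-lengths `min(|gᵢ₊₁ - gᵢ|, v - |gᵢ₊₁ - gᵢ|)`
of consecutive entries of a list of naturals. -/
def cycDiffs (v : ℕ) (l : List ℕ) : Multiset ℕ :=
  ↑(List.zipWith (fun a b => min ((a - b) + (b - a)) (v - ((a - b) + (b - a)))) l l.tail)

/-- `L` is (cyclically) realizable in `K_v`: some Hamiltonian path on the vertex
set `{0, …, v-1}` has `L` as its multiset of edge-lengths. -/
def IsRealizable (v : ℕ) (L : Multiset ℕ) : Prop :=
  ∃ l : List ℕ, l.Perm (List.range v) ∧ cycDiffs v l = L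

/-- The multiset `{1^a, x^b, y^c}`. -/
def mset3 (a b c x y : ℕ) : Multiset ℕ :=
  Multiset.replicate a 1 + Multiset.replicate b x + Multiset.replicate c y

/-- With `b = q'x + r'`, `0 ≤ r' < x`: `ω(x,b) = x - 1` if `q' = 0`, `r' = 1`,
or at least one of `x`, `r'` is even; otherwise `ω(x,b) = x`. -/
def omegaBHR (x b : ℕ) : ℕ :=
  if b / x = 0 ∨ b % x = 1 ∨ Even x ∨ Even (b % x) then x - 1 else x

/-- The reduced form `ĝ = min(g, v - g)`. -/
def reducedForm (v g : ℕ) : ℕ := min g (v - g)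

/-- The function `f` of Theorem 3.7 (counterexample characterization refined). -/
def fBHR (u w : ℕ) : ℕ :=
  if Even u ∧ Even w then w - 1
  else if u = 3 ∨ (Even u ∧ ¬ Even w) then u + w - 2
  else u + w - 1

/-- A multiset `L` of size `v - 1` with elements in `{1, …, ⌊v/2⌋}` is admissible
if for every divisor `d` of `v` the number of elements of `L` divisible by `d`
is at most `v - d`. -/
def IsAdmissible (v : ℕ) (L : Multiset ℕ) : Prop :=
  Multiset.card L = v - 1 ∧ (∀ z ∈ L, 1 ≤ z ∧ z ≤ v / 2) ∧
  ∀ d : ℕ, d ∣ v → Multiset.card (L.filter (fun z => d ∣ z)) ≤ v - d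

def cycDist (v a b : ℕ) : ℕ := reducedForm v ((a - b) + (b - a))

def cycLen {v : ℕ} (z : ZMod v) : ℕ := reducedForm v z.val

def scaleVertex {v : ℕ} (w : ZMod v) (a : ℕ) : ℕ := (w * (a : ZMod v)).val

def scaleLength {v : ℕ} (w : ZMod v) (d : ℕ) : ℕ := cycLen (w * (d : ZMod v))

lemma cycLen_le_half {v : ℕ} (z : ZMod v) : cycLen z ≤ v / 2 := by
  rw [cycLen, reducedForm]; omega

section Scaling

variable {v : ℕ} [NeZero v]

lemma cycLen_neg (z : ZMod v) : cycLen (-z) = cycLen z := by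
  rcases eq_or_ne z 0 with rfl | hz
  · simp
  · have : NeZero z := ⟨hz⟩
    have := z.val_lt
    have := (ZMod.val_ne_zero z).mpr hz
    rw [cycLen, cycLen, reducedForm, reducedForm, ZMod.val_neg_of_ne_zero]
    omega

lemma natCast_cycLen_eq_or (z : ZMod v) :
    (cycLen z : ZMod v) = z ∨ (cycLen z : ZMod v) = -z := by
  rcases min_choice z.val (v - z.val) with h | h <;> rw [cycLen, reducedForm, h]
  · exact .inl (ZMod.natCast_zmod_val z)
  · right
    rw [Nat.cast_sub z.val_lt.le, ZMod.natCast_self, zero_sub, ZMod.natCast_zmod_val]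

lemma cycLen_mul_natCast_cycLen (w z : ZMod v) :
    cycLen (w * (cycLen z : ZMod v)) = cycLen (w * z) := by
  rcases natCast_cycLen_eq_or z with h | h <;> rw [h]
  rw [mul_neg, cycLen_neg]

lemma cycLen_natCast_of_le_half {d : ℕ} (hd : d ≤ v / 2) : cycLen (d : ZMod v) = d := by
  rw [cycLen, reducedForm, ZMod.val_natCast_of_lt (by have := NeZero.pos v; omega)]
  omega

lemma cycLen_one (hv : 2 ≤ v) : cycLen (1 : ZMod v) = 1 := by
  simpa using cycLen_natCast_of_le_half (v := v) (d := 1) (by omega)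

lemma coprime_cycLen_of_isUnit {z : ZMod v} (hz : IsUnit z) : Nat.Coprime v (cycLen z) := by
  have : IsUnit (cycLen z : ZMod v) := by
    rcases natCast_cycLen_eq_or z with h | h <;> rw [h]
    exacts [hz, hz.neg]
  exact ((ZMod.isUnit_iff_coprime _ v).mp this).symm

lemma cycDist_eq_cycLen {a b : ℕ} (ha : a < v) (hb : b < v) :
    cycDist v a b = cycLen ((a : ZMod v) - (b : ZMod v)) := by
  rcases le_total a b with h | h
  · rw [← neg_sub, cycLen_neg, ← Nat.cast_sub h, cycLen, ZMod.val_natCast_of_lt (by omega),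
      cycDist]
    congr 1; omega
  · rw [← Nat.cast_sub h, cycLen, ZMod.val_natCast_of_lt (by omega), cycDist]
    congr 1; omega

lemma cycDist_scaleVertex (w : ZMod v) {a b : ℕ} (ha : a < v) (hb : b < v) :
    cycDist v (scaleVertex w a) (scaleVertex w b) = scaleLength w (cycDist v a b) := by
  rw [scaleVertex, scaleVertex, scaleLength, cycDist_eq_cycLen (ZMod.val_lt _) (ZMod.val_lt _),
    cycDist_eq_cycLen ha hb, cycLen_mul_natCast_cycLen, ZMod.natCast_zmod_val,
    ZMod.natCast_zmod_val, mul_sub]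

lemma zipWith_cycDist_map_scaleVertex (w : ZMod v) :
    ∀ l : List ℕ, (∀ a ∈ l, a < v) →
      List.zipWith (cycDist v) (l.map (scaleVertex w)) (l.map (scaleVertex w)).tail =
        (List.zipWith (cycDist v) l l.tail).map (scaleLength w)
  | [], _ | [_], _ => rfl
  | a :: b :: l, hl => by
    have ih := zipWith_cycDist_map_scaleVertex w (b :: l) fun c hc => hl c (.tail _ hc)
    simp only [List.map_cons, List.tail_cons, List.zipWith_cons_cons] at ih ⊢
    rw [cycDist_scaleVertex w (hl a (by simp)) (hl b (by simp)), ih]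

lemma perm_range_map_scaleVertex (u : (ZMod v)ˣ) :
    ((List.range v).map (scaleVertex (u : ZMod v))).Perm (List.range v) := by
  have hnodup : ((List.range v).map (scaleVertex (u : ZMod v))).Nodup := by
    refine List.nodup_range.map_on fun a ha b hb hab => ?_
    have hab' : (a : ZMod v) = b := (Units.mul_right_inj u).mp (ZMod.val_injective v hab)
    simpa [ZMod.val_natCast_of_lt (List.mem_range.mp ha),
      ZMod.val_natCast_of_lt (List.mem_range.mp hb)] using congrArg ZMod.val hab'
  have hsub : (List.range v).map (scaleVertex (u : ZMod v)) ⊆ List.range v := by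
    simp [List.subset_def, scaleVertex, ZMod.val_lt]
  exact (List.subperm_of_subset hnodup hsub).perm_of_length_le (by simp)

lemma IsRealizable.map_scaleLength (u : (ZMod v)ˣ) {L : Multiset ℕ} (h : IsRealizable v L) :
    IsRealizable v (L.map (scaleLength (u : ZMod v))) := by
  obtain ⟨l, hperm, rfl⟩ := h
  have hlt : ∀ a ∈ l, a < v := fun a ha => List.mem_range.mp (hperm.subset ha)
  exact ⟨l.map (scaleVertex (u : ZMod v)), (hperm.map _).trans (perm_range_map_scaleVertex u),
    congrArg ((↑) : List ℕ → Multiset ℕ) (zipWith_cycDist_map_scaleVertex _ l hlt)⟩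

variable (u : (ZMod v)ˣ)

lemma scaleLength_scaleLength_inv {d : ℕ} (hd : d ≤ v / 2) :
    scaleLength (u : ZMod v) (scaleLength (↑u⁻¹ : ZMod v) d) = d := by
  rw [scaleLength, scaleLength, cycLen_mul_natCast_cycLen, Units.mul_inv_cancel_left,
    cycLen_natCast_of_le_half hd]

lemma injOn_scaleLength_inv : Set.InjOn (scaleLength (↑u⁻¹ : ZMod v)) {d | d ≤ v / 2} :=
  fun a ha b hb hab => by
    rw [← scaleLength_scaleLength_inv u ha, ← scaleLength_scaleLength_inv u hb, hab]

lemma one_le_scaleLength_inv {d : ℕ} (hd : d ≤ v / 2) (hd1 : 1 ≤ d) :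
    1 ≤ scaleLength (↑u⁻¹ : ZMod v) d := by
  refine Nat.one_le_iff_ne_zero.mpr fun h0 => ?_
  have := scaleLength_scaleLength_inv u hd
  rw [h0, scaleLength, Nat.cast_zero, mul_zero, cycLen, ZMod.val_zero, reducedForm] at this
  omega

lemma isRealizable_of_map_scaleLength_inv {L : Multiset ℕ} (hL : ∀ d ∈ L, d ≤ v / 2)
    (h : IsRealizable v (L.map (scaleLength (↑u⁻¹ : ZMod v)))) : IsRealizable v L := by
  have hid : (L.map (scaleLength (↑u⁻¹ : ZMod v))).map (scaleLength (u : ZMod v)) = L := by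
    rw [Multiset.map_map]
    conv_rhs => rw [← Multiset.map_id L]
    exact Multiset.map_congr rfl fun d hd => scaleLength_scaleLength_inv u (hL d hd)
  exact hid ▸ h.map_scaleLength u

end Scaling

lemma Multiset.count_map_le_count_map_of_injOn {α β : Type*} [DecidableEq α] [DecidableEq β]
    {s : Multiset α} {f : α → β} (hf : Set.InjOn f {x | x ∈ s}) {a : α}
    (hmax : ∀ x ∈ s, s.count x ≤ s.count a) (ha : a ∈ s) (z : β) :
    (s.map f).count z ≤ (s.map f).count (f a) := by
  by_cases hz : z ∈ s.map f
  · obtain ⟨x, hx, rfl⟩ := Multiset.mem_map.mp hz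
    rw [Multiset.count_map_eq_count f s hf x hx, Multiset.count_map_eq_count f s hf a ha]
    exact hmax x hx
  · simp [Multiset.count_eq_zero.mpr hz]

lemma eq_mset3_of_toFinset_eq {M : Multiset ℕ} {x y : ℕ} (hx1 : x ≠ 1) (hy1 : y ≠ 1)
    (hxy : x ≠ y) (hM : M.toFinset = {1, x, y}) :
    M = mset3 (M.count 1) (M.count x) (M.count y) x y := by
  ext z
  simp only [mset3, Multiset.count_add, Multiset.count_replicate]
  by_cases hz : z ∈ M
  · rw [← Multiset.mem_toFinset, hM] at hz
    simp only [Finset.mem_insert, Finset.mem_singleton] at hz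
    rcases hz with rfl | rfl | rfl
    · simp [hx1, hy1]
    · simp [hx1.symm, hxy.symm]
    · simp [hy1.symm, hxy]
  · have : z ≠ 1 ∧ z ≠ x ∧ z ≠ y := by
      simpa [← Multiset.mem_toFinset, hM, not_or] using hz
    simp [Multiset.count_eq_zero.mpr hz, this.1.symm, this.2.1.symm, this.2.2.symm]

def CoprimeBHRForOneXY : Prop :=
  ∀ v x y a b c : ℕ, 2 ≤ v → 1 < x → x < y → y ≤ v / 2 →
    Nat.gcd v x = 1 → Nat.gcd v y = 1 → 1 ≤ a → 1 ≤ b → 1 ≤ c →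
    a + b + c = v - 1 → max b c ≤ a → IsRealizable v (mset3 a b c x y)

lemma CoprimeBHRForOneXY.isRealizable (H : CoprimeBHRForOneXY) {v : ℕ} (hv : 2 ≤ v)
    {M : Multiset ℕ} (hcard : Multiset.card M = v - 1) (hsupp : M.toFinset.card = 3)
    (h1 : 1 ∈ M) (hmax : ∀ z, M.count z ≤ M.count 1)
    (hmem : ∀ z ∈ M, 1 ≤ z ∧ z ≤ v / 2 ∧ Nat.gcd v z = 1) : IsRealizable v M := by
  obtain ⟨x, y, hx1, hy1, hxy, hM⟩ :
      ∃ x y, x ≠ 1 ∧ y ≠ 1 ∧ x < y ∧ M.toFinset = {1, x, y} := by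
    have h1' : 1 ∈ M.toFinset := Multiset.mem_toFinset.mpr h1
    obtain ⟨x, y, hne, he⟩ : ∃ x y, x ≠ y ∧ M.toFinset.erase 1 = {x, y} := by
      apply Finset.card_eq_two.mp
      rw [Finset.card_erase_of_mem h1', hsupp]
    have hx1 : x ≠ 1 := Finset.ne_of_mem_erase (he ▸ Finset.mem_insert_self x {y})
    have hy1 : y ≠ 1 :=
      Finset.ne_of_mem_erase (he ▸ Finset.mem_insert_of_mem (Finset.mem_singleton_self y))
    have hM : M.toFinset = {1, x, y} := by rw [← he, Finset.insert_erase h1']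
    rcases hne.lt_or_gt with h | h
    · exact ⟨x, y, hx1, hy1, h, hM⟩
    · exact ⟨y, x, hy1, hx1, h, by rw [hM, Finset.pair_comm]⟩
  have hmemM : ∀ z ∈ ({1, x, y} : Finset ℕ), z ∈ M := by
    simp [← Multiset.mem_toFinset, hM]
  have hMeq := eq_mset3_of_toFinset_eq hx1 hy1 hxy.ne hM
  have hsum := hcard ▸ congrArg Multiset.card hMeq
  simp only [mset3, Multiset.card_add, Multiset.card_replicate] at hsum
  obtain ⟨hx, -, hxv⟩ := hmem x (hmemM x (by simp))
  obtain ⟨-, hyv, hyv'⟩ := hmem y (hmemM y (by simp))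
  rw [hMeq]
  refine H v x y _ _ _ hv (by omega) hxy hyv hxv hyv' ?_ ?_ ?_ hsum.symm
    (max_le (hmax x) (hmax y)) <;> exact Multiset.one_le_count_iff_mem.mpr (hmemM _ (by simp))

/-- If the Coprime BHR Conjecture holds for multisets
`{1^a, x^b, y^c}` with `a ≥ max(b, c)`, then it holds for all multisets with
support of size 3. -/
theorem stmt2
    (H : ∀ v x y a b c : ℕ, 2 ≤ v → 1 < x → x < y → y ≤ v / 2 →
      Nat.gcd v x = 1 → Nat.gcd v y = 1 → 1 ≤ a → 1 ≤ b → 1 ≤ c →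
      a + b + c = v - 1 → max b c ≤ a → IsRealizable v (mset3 a b c x y)) :
    ∀ v : ℕ, 2 ≤ v → ∀ L : Multiset ℕ, Multiset.card L = v - 1 →
      L.toFinset.card = 3 → (∀ z ∈ L, 1 ≤ z ∧ z ≤ v / 2 ∧ Nat.gcd v z = 1) →
      IsRealizable v L := by
  intro v hv L hcard hsupp hmem
  have : NeZero v := ⟨by omega⟩
  obtain ⟨s, hsL, hsmax⟩ := L.toFinset.exists_max_image L.count (Finset.card_pos.mp (by omega))
  rw [Multiset.mem_toFinset] at hsL
  have hs : Nat.Coprime s v := Nat.Coprime.symm (hmem s hsL).2.2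
  set u := ZMod.unitOfCoprime s hs
  have hinj : Set.InjOn (scaleLength (↑u⁻¹ : ZMod v)) {d | d ∈ L} :=
    (injOn_scaleLength_inv u).mono fun d hd => (hmem d hd).2.1
  have hs1 : scaleLength (↑u⁻¹ : ZMod v) s = 1 := by
    rw [scaleLength, ← ZMod.coe_unitOfCoprime s hs, Units.inv_mul, cycLen_one hv]
  refine isRealizable_of_map_scaleLength_inv u (fun d hd => (hmem d hd).2.1) ?_
  refine CoprimeBHRForOneXY.isRealizable H hv (by simpa using hcard) ?_
    (Multiset.mem_map.mpr ⟨s, hsL, hs1⟩) ?_ ?_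
  · rw [Multiset.toFinset_map, Finset.card_image_of_injOn (by simpa [Set.InjOn] using hinj), hsupp]
  · exact hs1 ▸ Multiset.count_map_le_count_map_of_injOn hinj
      (fun x hx => hsmax x (Multiset.mem_toFinset.mpr hx)) hsL
  · intro z hz
    obtain ⟨d, hd, rfl⟩ := Multiset.mem_map.mp hz
    obtain ⟨hd1, hdv, hdcop⟩ := hmem d hd
    exact ⟨one_le_scaleLength_inv u hdv hd1, cycLen_le_half _, coprime_cycLen_of_isUnit
      (u⁻¹.isUnit.mul ((ZMod.isUnit_iff_coprime d v).mpr (Nat.Coprime.symm hdcop)))⟩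
end

section
/- Suppose that for every integer v ≥ 2, all integers x, y with 1 < x < y ≤ ⌊v/2⌋ and gcd(v,x) = gcd(v,y) = 1, and all integers a, b, c ≥ 1 with a + b + c = v − 1 and a + b ≥ y − 1, the multiset {1^a, x^b, y^c} is realizable. Then for every integer v ≥ 2, every multiset L of size v − 1 whose support consists of exactly three elements, all lying in {1, …, ⌊v/2⌋} and all coprime to v, is realizable. -/
/-!
Multiplying every vertex of a Hamiltonian path of `K_v` by a unit `s` of `ℤ/v` gives another
Hamiltonian path, and each edge-length `d` becomes the reduced length of `s d`. Let `p` be the most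
frequent element of `L = {p^a, q^b, r^c}`. Multiplication by `p⁻¹` turns `L` into
`{1^a, x^b, y^c}` with `1, x, y` distinct and coprime to `v`, and `a ≥ b, c` gives `a + b ≥ y - 1`
(after swapping `x` and `y` if necessary). Multiplying a realization of `{1^a, x^b, y^c}` by `p`
realizes `L`.
-/

namespace ZMod

variable {v : ℕ}

/-- The edge-length `min(s d mod v, v - s d mod v)` into which multiplication by `s` turns the
edge-length `d`. -/
def mulLength (s : ZMod v) (d : ℕ) : ℕ := (s * d).valMinAbs.natAbs

lemma mulLength_le_half [NeZero v] (s : ZMod v) (d : ℕ) : mulLength s d ≤ v / 2 :=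
  natAbs_valMinAbs_le _

lemma mulLength_natAbs_valMinAbs [NeZero v] (s x : ZMod v) :
    mulLength s x.valMinAbs.natAbs = (s * x).valMinAbs.natAbs := by
  rw [mulLength, natCast_natAbs_valMinAbs]
  split_ifs
  · rfl
  · rw [mul_neg, natAbs_valMinAbs_neg]

lemma mulLength_mulLength [NeZero v] (s t : ZMod v) (d : ℕ) :
    mulLength s (mulLength t d) = mulLength (s * t) d :=
  (mulLength_natAbs_valMinAbs s (t * d)).trans (by rw [mulLength, mul_assoc])

lemma mulLength_one_of_le_half {d : ℕ} (hd : d ≤ v / 2) : mulLength (1 : ZMod v) d = d := by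
  rw [mulLength, one_mul, valMinAbs_natCast_of_le_half hd, Int.natAbs_natCast]

lemma coprime_mulLength [NeZero v] {s : ZMod v} (hs : IsUnit s) {d : ℕ} (hd : v.Coprime d) :
    v.Coprime (mulLength s d) := by
  have hsd : IsUnit (s * d) := hs.mul ((isUnit_iff_coprime d v).mpr hd.symm)
  refine ((isUnit_iff_coprime _ v).mp ?_).symm
  rw [mulLength, natCast_natAbs_valMinAbs]
  split_ifs
  · exact hsd
  · exact hsd.neg

end ZMod

open ZMod

lemma cycDiffs_eq_zipWith {v : ℕ} [NeZero v] {l : List ℕ} (hl : ∀ g ∈ l, g < v) :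
    cycDiffs v l =
      ↑(List.zipWith (fun a b : ℕ => ((a : ZMod v) - b).valMinAbs.natAbs) l l.tail) := by
  rw [cycDiffs, ← List.map_uncurry_zip_eq_zipWith, ← List.map_uncurry_zip_eq_zipWith]
  congr 1
  refine List.map_congr_left fun ⟨a, b⟩ hab => ?_
  obtain ⟨ha, hb⟩ := List.of_mem_zip hab
  have hav := hl a ha
  have hbv := hl b (List.mem_of_mem_tail hb)
  simp only [Function.uncurry_apply_pair]
  rcases le_total b a with h | h
  · rw [← Nat.cast_sub h, valMinAbs_natAbs_eq_min, val_natCast_of_lt (by omega)]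
    omega
  · rw [← neg_sub, natAbs_valMinAbs_neg, ← Nat.cast_sub h, valMinAbs_natAbs_eq_min,
      val_natCast_of_lt (by omega)]
    omega

lemma List.Perm.map_val_mul {v : ℕ} [NeZero v] {s : ZMod v} (hs : IsUnit s) {l : List ℕ}
    (hl : l.Perm (List.range v)) : (l.map fun g : ℕ => (s * g).val).Perm (List.range v) := by
  refine (hl.map _).trans ?_
  have hinj : ∀ a ∈ List.range v, ∀ b ∈ List.range v, (s * a).val = (s * b).val → a = b := by
    intro a ha b hb hab
    have := hs.mul_left_cancel (val_injective v hab)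
    rw [List.mem_range] at ha hb
    rw [← val_natCast_of_lt ha, ← val_natCast_of_lt hb, this]
  refine (List.Nodup.subperm (List.nodup_range.map_on hinj) ?_).perm_of_length_le (by simp)
  intro g hg
  obtain ⟨a, -, rfl⟩ := List.mem_map.mp hg
  exact List.mem_range.mpr (val_lt _)

theorem IsRealizable.map_mulLength {v : ℕ} [NeZero v] {s : ZMod v} (hs : IsUnit s)
    {L : Multiset ℕ} (h : IsRealizable v L) : IsRealizable v (L.map (mulLength s)) := by
  obtain ⟨l, hl, rfl⟩ := h
  have hlt : ∀ g ∈ l, g < v := fun g hg => List.mem_range.mp (hl.mem_iff.mp hg)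
  refine ⟨l.map fun g : ℕ => (s * g).val, hl.map_val_mul hs, ?_⟩
  rw [cycDiffs_eq_zipWith (by simpa using fun g _ => val_lt _), cycDiffs_eq_zipWith hlt,
    Multiset.map_coe, List.map_zipWith, ← List.map_tail, List.zipWith_map]
  simp only [natCast_zmod_val, mulLength_natAbs_valMinAbs, mul_sub]

lemma Multiset.exists_eq_replicate_add_replicate_add_replicate {α : Type*} [DecidableEq α]
    {L : Multiset α} (h : L.toFinset.card = 3) :
    ∃ p q r, p ≠ q ∧ p ≠ r ∧ q ≠ r ∧ p ∈ L ∧ q ∈ L ∧ r ∈ L ∧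
      L.count q ≤ L.count p ∧ L.count r ≤ L.count p ∧
      L = replicate (L.count p) p + replicate (L.count q) q + replicate (L.count r) r := by
  obtain ⟨p, hp, hmax⟩ := L.toFinset.exists_max_image L.count (Finset.card_pos.mp (by omega))
  obtain ⟨q, r, hqr, hrest⟩ : ∃ q r, q ≠ r ∧ L.toFinset.erase p = {q, r} :=
    Finset.card_eq_two.mp (by rw [Finset.card_erase_of_mem hp, h])
  have hq : q ∈ L.toFinset.erase p := by simp [hrest]
  have hr : r ∈ L.toFinset.erase p := by simp [hrest]
  refine ⟨p, q, r, (Finset.ne_of_mem_erase hq).symm, (Finset.ne_of_mem_erase hr).symm, hqr,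
    mem_toFinset.mp hp, mem_toFinset.mp (Finset.mem_of_mem_erase hq),
    mem_toFinset.mp (Finset.mem_of_mem_erase hr), hmax q (Finset.mem_of_mem_erase hq),
    hmax r (Finset.mem_of_mem_erase hr), ?_⟩
  calc L = ∑ z ∈ insert p (L.toFinset.erase p), L.count z • {z} := by
        rw [Finset.insert_erase hp, toFinset_sum_count_nsmul_eq]
    _ = _ := by
        rw [hrest, Finset.sum_insert (by simpa [hrest] using Finset.notMem_erase p L.toFinset),
          Finset.sum_pair hqr]
        simp only [nsmul_singleton, add_assoc]

lemma isRealizable_mset3_of_ne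
    (H : ∀ v x y a b c : ℕ, 2 ≤ v → 1 < x → x < y → y ≤ v / 2 →
      Nat.gcd v x = 1 → Nat.gcd v y = 1 → 1 ≤ a → 1 ≤ b → 1 ≤ c →
      a + b + c = v - 1 → y - 1 ≤ a + b → IsRealizable v (mset3 a b c x y))
    {v x y a b c : ℕ} (hv : 2 ≤ v) (hx : 1 < x) (hy : 1 < y) (hxy : x ≠ y)
    (hxv : x ≤ v / 2) (hyv : y ≤ v / 2) (hvx : Nat.gcd v x = 1) (hvy : Nat.gcd v y = 1)
    (ha : 1 ≤ a) (hb : 1 ≤ b) (hc : 1 ≤ c) (hba : b ≤ a) (hca : c ≤ a)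
    (hsum : a + b + c = v - 1) : IsRealizable v (mset3 a b c x y) := by
  rcases hxy.lt_or_gt with hlt | hlt
  · exact H v x y a b c hv hx hlt hyv hvx hvy ha hb hc hsum (by omega)
  · rw [mset3, add_right_comm]
    exact H v y x a c b hv hy hlt hxv hvy hvx ha hc hb (by omega) (by omega)

theorem isRealizable_replicate_three {v p q r a b c : ℕ} (hv : 2 ≤ v)
    (hpq : p ≠ q) (hpr : p ≠ r) (hqr : q ≠ r) (hp : p ≤ v / 2 ∧ Nat.gcd v p = 1)
    (hq : q ≤ v / 2 ∧ Nat.gcd v q = 1) (hr : r ≤ v / 2 ∧ Nat.gcd v r = 1)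
    (hmset3 : ∀ x y, 1 < x → 1 < y → x ≠ y → x ≤ v / 2 → y ≤ v / 2 →
      Nat.gcd v x = 1 → Nat.gcd v y = 1 → IsRealizable v (mset3 a b c x y)) :
    IsRealizable v (Multiset.replicate a p + Multiset.replicate b q + Multiset.replicate c r) := by
  have : NeZero v := ⟨by omega⟩
  set u : ZMod v := (p : ZMod v)⁻¹
  have hpu : (p : ZMod v) * u = 1 := coe_mul_inv_eq_one p (Nat.Coprime.symm hp.2)
  have hback : ∀ z ≤ v / 2, mulLength (p : ZMod v) (mulLength u z) = z := fun z hz => by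
    rw [mulLength_mulLength, hpu, mulLength_one_of_le_half hz]
  have hinj : ∀ z ≤ v / 2, ∀ w ≤ v / 2, mulLength u z = mulLength u w → z = w :=
    fun z hz w hw hzw => by rw [← hback z hz, hzw, hback w hw]
  have hup : mulLength u p = 1 := by
    rw [mulLength, mul_comm, hpu, ← Nat.cast_one, valMinAbs_natCast_of_le_half (by omega)]
    rfl
  have hu : IsUnit u := .of_mul_eq_one_right _ hpu
  have hgt : ∀ z ≤ v / 2, Nat.gcd v z = 1 → z ≠ p → 1 < mulLength u z := fun z hz hvz hzp => by
    have hcop := coprime_mulLength hu hvz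
    have h0 : mulLength u z ≠ 0 := fun h0 => by
      rw [h0, Nat.Coprime, Nat.gcd_zero_right] at hcop
      omega
    have h1 : mulLength u z ≠ 1 := fun h1 => hzp (hinj z hz p hp.1 (h1.trans hup.symm))
    omega
  have hreal := (hmset3 _ _ (hgt q hq.1 hq.2 hpq.symm) (hgt r hr.1 hr.2 hpr.symm)
    (fun h => hqr (hinj q hq.1 r hr.1 h)) (mulLength_le_half u q) (mulLength_le_half u r)
    (coprime_mulLength hu hq.2) (coprime_mulLength hu hr.2)).map_mulLength
    ((isUnit_iff_coprime p v).mpr (Nat.Coprime.symm hp.2))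
  rwa [mset3, Multiset.map_add, Multiset.map_add, Multiset.map_replicate, Multiset.map_replicate,
    Multiset.map_replicate, ← hup, hback p hp.1, hback q hq.1, hback r hr.1] at hreal

/-- If the Coprime BHR Conjecture holds for multisets
`{1^a, x^b, y^c}` with `a + b ≥ y - 1`, then it holds for all multisets with
support of size 3. -/
theorem stmt3
    (H : ∀ v x y a b c : ℕ, 2 ≤ v → 1 < x → x < y → y ≤ v / 2 →
      Nat.gcd v x = 1 → Nat.gcd v y = 1 → 1 ≤ a → 1 ≤ b → 1 ≤ c →
      a + b + c = v - 1 → y - 1 ≤ a + b → IsRealizable v (mset3 a b c x y)) :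
    ∀ v : ℕ, 2 ≤ v → ∀ L : Multiset ℕ, Multiset.card L = v - 1 →
      L.toFinset.card = 3 → (∀ z ∈ L, 1 ≤ z ∧ z ≤ v / 2 ∧ Nat.gcd v z = 1) →
      IsRealizable v L := by
  intro v hv L hcard hsupp hL
  obtain ⟨p, q, r, hpq, hpr, hqr, hp, hq, hr, hqp, hrp, hdecomp⟩ :=
    Multiset.exists_eq_replicate_add_replicate_add_replicate hsupp
  have hsum : L.count p + L.count q + L.count r = v - 1 := by
    rw [← hcard]
    conv_rhs => rw [hdecomp]
    simp only [Multiset.card_add, Multiset.card_replicate]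
  rw [hdecomp]
  exact isRealizable_replicate_three hv hpq hpr hqr (hL p hp).2 (hL q hq).2 (hL r hr).2
    fun x y hx hy hxy hxv hyv hvx hvy => isRealizable_mset3_of_ne H hv hx hy hxy hxv hyv hvx hvy
      (Multiset.count_pos.mpr hp) (Multiset.count_pos.mpr hq) (Multiset.count_pos.mpr hr)
      hqp hrp hsum
end

section
/- Let L be a multiset of size v−1 that has a standard linear realization and let M be a multiset of size w−1 that has a standard linear realization. Then the multiset union L ∪ M (of size v+w−2) has a linear realization. If the realization of M is perfect, then L ∪ M has a standard linear realization, and if the realizations of both L and M are perfect, then L ∪ M has a perfect linear realization. Moreover, if L has a standard (respectively perfect) linear realization, then for every integer s ≥ 0 the multiset L ∪ {1^s} has a standard (respectively perfect) linear realization. -/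
open List

theorem linDiffs_cons_cons (a b : ℕ) (t : List ℕ) :
    linDiffs (a :: b :: t) = Nat.dist a b ::ₘ linDiffs (b :: t) := rfl

theorem linDiffs_append_cons (x : List ℕ) (a : ℕ) (y : List ℕ) :
    linDiffs (x ++ a :: y) = linDiffs (x ++ [a]) + linDiffs (a :: y) := by
  induction x with
  | nil => rfl
  | cons b x ih =>
    cases x with
    | nil => rfl
    | cons c x =>
      simp only [cons_append, linDiffs_cons_cons] at ih ⊢
      rw [ih, Multiset.cons_add]

theorem linDiffs_append_tail {x y : List ℕ} {a : ℕ} (hx : x.getLast? = some a)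
    (hy : y.head? = some a) : linDiffs (x ++ y.tail) = linDiffs x + linDiffs y := by
  obtain ⟨x, rfl⟩ := getLast?_eq_some_iff.mp hx
  obtain ⟨y, rfl⟩ := head?_eq_some_iff.mp hy
  rw [append_assoc, singleton_append, tail_cons, linDiffs_append_cons]

theorem linDiffs_reverse (l : List ℕ) : linDiffs l.reverse = linDiffs l := by
  induction l with
  | nil => rfl
  | cons a t ih =>
    cases t with
    | nil => rfl
    | cons b t =>
      rw [reverse_cons, reverse_cons, append_assoc, singleton_append, linDiffs_append_cons,
        ← reverse_cons, ih, linDiffs_cons_cons, linDiffs_cons_cons, Nat.dist_comm]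
      exact add_comm _ _

theorem linDiffs_map (g : ℕ → ℕ) :
    ∀ l : List ℕ, (∀ x ∈ l, ∀ y ∈ l, Nat.dist (g x) (g y) = Nat.dist x y) →
      linDiffs (l.map g) = linDiffs l
  | [], _ | [_], _ => rfl
  | a :: b :: t, hg => by
    rw [map_cons, map_cons, linDiffs_cons_cons, ← map_cons,
      linDiffs_map g (b :: t) fun x hx y hy => hg x (mem_cons_of_mem a hx) y (mem_cons_of_mem a hy),
      hg a (by simp) b (by simp), linDiffs_cons_cons]

theorem linDiffs_range' (k n : ℕ) : linDiffs (range' k (n + 1)) = Multiset.replicate n 1 := by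
  induction n generalizing k with
  | zero => rfl
  | succ n ih =>
    rw [range'_succ, range'_succ (s := k + 1), linDiffs_cons_cons, ← range'_succ, ih,
      Nat.dist_eq_sub_of_le (by omega)]
    simp

theorem List.getLast?_append_tail {α : Type*} {x y : List α} {a : α} (hx : x.getLast? = some a)
    (hy : y.head? = some a) : (x ++ y.tail).getLast? = y.getLast? := by
  obtain ⟨y, rfl⟩ := head?_eq_some_iff.mp hy
  cases y <;> simp [hx, getLast?_cons]

theorem List.Perm.map_tsub_range {l : List ℕ} {n : ℕ} (h : l ~ range (n + 1)) :
    l.map (n - ·) ~ range (n + 1) := by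
  have hrev : (range (n + 1)).map (n - ·) = (range (n + 1)).reverse := by
    simp [range_eq_range', reverse_range']
  exact (h.map _).trans (hrev ▸ reverse_perm _)

theorem List.Perm.tail_map_add_range {l : List ℕ} {a : ℕ} (h : l ~ range (a + 1))
    (h0 : l.head? = some 0) (k : ℕ) : (l.map (· + k)).tail ~ (range a).map (k + 1 + ·) := by
  obtain ⟨t, rfl⟩ := head?_eq_some_iff.mp h0
  rw [range_succ_eq_map] at h
  have := (h.cons_inv).map (· + k)
  rw [map_cons, tail_cons]
  convert this using 1
  simp only [map_map]
  exact map_congr_left fun x _ => by simp only [Function.comp_apply]; omega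

def linJoin (b : ℕ) (l m : List ℕ) : List ℕ :=
  (m.map (b - ·)).reverse ++ (l.map (· + b)).tail

section linJoin

variable {L M : Multiset ℕ} {l m : List ℕ}

theorem isLinearRealization_linJoin (hl : IsLinearRealization L l) (hl0 : l.head? = some 0)
    (hm : IsLinearRealization M m) (hm0 : m.head? = some 0) :
    IsLinearRealization (L + M) (linJoin (Multiset.card M) l m) := by
  set b := Multiset.card M
  have hle : ∀ x ∈ m, x ≤ b := fun x hx => Nat.lt_succ_iff.mp (mem_range.mp (hm.1.subset hx))
  constructor
  · have hX : (m.map (b - ·)).reverse ~ range (b + 1) := (reverse_perm _).trans hm.1.map_tsub_range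
    have hcard : Multiset.card (L + M) + 1 = b + 1 + Multiset.card L := by
      rw [Multiset.card_add]; omega
    rw [hcard, range_add]
    exact hX.append (hl.1.tail_map_add_range hl0 b)
  · rw [linJoin, linDiffs_append_tail (a := b) (by simp [hm0]) (by simp [hl0]), linDiffs_reverse,
      linDiffs_map _ l fun x _ y _ => Nat.dist_add_add_right x b y,
      linDiffs_map _ m fun x hx y hy => ?_, hl.2, hm.2, add_comm]
    have := hle x hx; have := hle y hy
    simp only [Nat.dist]; omega

theorem head?_linJoin (b : ℕ) (l : List ℕ) (hm : m ≠ []) :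
    (linJoin b l m).head? = m.getLast?.map (b - ·) := by
  simp [linJoin, getLast?_eq_some_getLast hm]

theorem getLast?_linJoin (b : ℕ) (hl0 : l.head? = some 0) (hm0 : m.head? = some 0) :
    (linJoin b l m).getLast? = l.getLast?.map (· + b) := by
  rw [linJoin, getLast?_append_tail (a := b) (by simp [hm0]) (by simp [hl0]), getLast?_map]

end linJoin

section

variable {L M : Multiset ℕ}

theorem hasLinearRealization_add (hL : HasStandardLinearRealization L)
    (hM : HasStandardLinearRealization M) : HasLinearRealization (L + M) := by
  obtain ⟨l, hl, hl0⟩ := hL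
  obtain ⟨m, hm, hm0⟩ := hM
  exact ⟨_, isLinearRealization_linJoin hl hl0 hm hm0⟩

theorem hasStandardLinearRealization_add (hL : HasStandardLinearRealization L)
    (hM : HasPerfectLinearRealization M) : HasStandardLinearRealization (L + M) := by
  obtain ⟨l, hl, hl0⟩ := hL
  obtain ⟨m, hm, hm0, hmb⟩ := hM
  refine ⟨_, isLinearRealization_linJoin hl hl0 hm hm0, ?_⟩
  rw [head?_linJoin _ _ (ne_nil_of_mem (mem_of_mem_head? hm0)), hmb, Option.map_some, Nat.sub_self]

theorem hasPerfectLinearRealization_add (hL : HasPerfectLinearRealization L)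
    (hM : HasPerfectLinearRealization M) : HasPerfectLinearRealization (L + M) := by
  obtain ⟨l, hl, hl0, hla⟩ := hL
  obtain ⟨m, hm, hm0, hmb⟩ := hM
  refine ⟨_, isLinearRealization_linJoin hl hl0 hm hm0, ?_, ?_⟩
  · rw [head?_linJoin _ _ (ne_nil_of_mem (mem_of_mem_head? hm0)), hmb, Option.map_some, Nat.sub_self]
  · rw [getLast?_linJoin _ hl0 hm0, hla, Option.map_some, Multiset.card_add]

end

theorem hasPerfectLinearRealization_replicate_one (s : ℕ) :
    HasPerfectLinearRealization (Multiset.replicate s 1) := by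
  refine ⟨range (s + 1), ⟨by simp, ?_⟩, by simp [range_succ_eq_map], by simp [range_succ]⟩
  rw [range_eq_range', linDiffs_range']

/-- Concatenation of linear realizations. -/
theorem stmt4 (L M : Multiset ℕ) :
    (HasStandardLinearRealization L → HasStandardLinearRealization M →
      HasLinearRealization (L + M)) ∧
    (HasStandardLinearRealization L → HasPerfectLinearRealization M →
      HasStandardLinearRealization (L + M)) ∧
    (HasPerfectLinearRealization L → HasPerfectLinearRealization M →
      HasPerfectLinearRealization (L + M)) ∧
    (HasStandardLinearRealization L → ∀ s : ℕ,
      HasStandardLinearRealization (L + Multiset.replicate s 1)) ∧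
    (HasPerfectLinearRealization L → ∀ s : ℕ,
      HasPerfectLinearRealization (L + Multiset.replicate s 1)) :=
  ⟨hasLinearRealization_add, hasStandardLinearRealization_add, hasPerfectLinearRealization_add,
    fun hL s => hasStandardLinearRealization_add hL (hasPerfectLinearRealization_replicate_one s),
    fun hL s => hasPerfectLinearRealization_add hL (hasPerfectLinearRealization_replicate_one s)⟩
end

section
/- Let x, y, a, b, c be integers with 1 < x < y, a ≥ 0, b ≥ 0 and c > 0. If the multiset L = {1^a, x^b, y^c} has a linear realization, then a + b ≥ y − 1. -/
/-! Reduce the realization modulo `y`. Since `y` occurs as a difference, `v > y`, so the path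
visits all `y` residue classes; but consecutive entries change class only across a difference
not divisible by `y`, i.e. a `1` or an `x`. Hence `y ≤ a + b + 1`. -/

lemma linDiffs_cons_cons_s5 (u w : ℕ) (t : List ℕ) :
    linDiffs (u :: w :: t) = ((u - w) + (w - u)) ::ₘ linDiffs (w :: t) := rfl

lemma lt_of_mem_linDiffs {l : List ℕ} {v d : ℕ} (hl : ∀ u ∈ l, u < v) (hd : d ∈ linDiffs l) :
    d < v := by
  induction l with
  | nil => simp [linDiffs] at hd
  | cons u t ih =>
    cases t with
    | nil => simp [linDiffs] at hd
    | cons w t =>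
      rw [linDiffs_cons_cons_s5, Multiset.mem_cons] at hd
      rcases hd with rfl | hd
      · have := hl u (by simp); have := hl w (by simp); omega
      · exact ih (fun z hz => hl z (List.mem_cons_of_mem u hz)) hd

lemma mod_eq_mod_of_dvd_absDiff {y u w : ℕ} (h : y ∣ (u - w) + (w - u)) : u % y = w % y := by
  rcases le_total u w with huw | hwu
  · exact ((Nat.modEq_iff_dvd' huw).2 (by simpa [Nat.sub_eq_zero_of_le huw] using h))
  · exact ((Nat.modEq_iff_dvd' hwu).2 (by simpa [Nat.sub_eq_zero_of_le hwu] using h)).symm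

-- A walk can only enter a new residue class mod `y` through a step not divisible by `y`.
lemma card_residues_le_card_filter_linDiffs (y : ℕ) (l : List ℕ) :
    (l.map (· % y)).toFinset.card ≤ Multiset.card ((linDiffs l).filter (¬ y ∣ ·)) + 1 := by
  induction l with
  | nil => simp
  | cons u t ih =>
    cases t with
    | nil => simp
    | cons w t =>
      rw [linDiffs_cons_cons_s5, Multiset.filter_cons, List.map_cons, List.toFinset_cons]
      by_cases hd : y ∣ (u - w) + (w - u)
      · have : u % y ∈ ((w :: t).map (· % y)).toFinset := by
          simp [mod_eq_mod_of_dvd_absDiff hd]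
        rwa [if_neg (not_not.2 hd), Finset.insert_eq_of_mem this]
      · have := Finset.card_insert_le (u % y) ((w :: t).map (· % y)).toFinset
        rw [if_pos hd, Multiset.card_add, Multiset.card_singleton]
        omega

lemma card_filter_not_dvd_mset3 {a b c x y : ℕ} (hx : 0 < x) (hxy : x < y) :
    Multiset.card ((mset3 a b c x y).filter (¬ y ∣ ·)) = a + b := by
  have h1 : ¬ y ∣ 1 := fun h => by have := Nat.le_of_dvd one_pos h; omega
  have hyx : ¬ y ∣ x := fun h => by have := Nat.le_of_dvd hx h; omega
  simp [mset3, Multiset.filter_add, Multiset.filter_eq_self.2, Multiset.filter_eq_nil.2,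
    Multiset.mem_replicate, h1, hyx]

/-- If `1 < x < y`, `c > 0` and `{1^a, x^b, y^c}` has a linear
realization, then `a + b ≥ y - 1`. -/
theorem stmt5 (x y a b c : ℕ) (hx : 1 < x) (hxy : x < y) (hc : 0 < c)
    (h : HasLinearRealization (mset3 a b c x y)) :
    y - 1 ≤ a + b := by
  obtain ⟨l, hperm, hdiff⟩ := h
  have hlt : ∀ u ∈ l, u < Multiset.card (mset3 a b c x y) + 1 := fun u hu =>
    List.mem_range.1 (hperm.mem_iff.1 hu)
  have hyv : y < Multiset.card (mset3 a b c x y) + 1 :=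
    lt_of_mem_linDiffs hlt (by
      rw [hdiff]; exact Multiset.mem_add.2 (Or.inr (Multiset.mem_replicate.2 ⟨hc.ne', rfl⟩)))
  have hcover : Finset.range y ⊆ (l.map (· % y)).toFinset := fun i hi => by
    rw [Finset.mem_range] at hi
    simp only [List.mem_toFinset, List.mem_map, hperm.mem_iff, List.mem_range]
    exact ⟨i, by omega, Nat.mod_eq_of_lt hi⟩
  have hcount := (Finset.card_le_card hcover).trans (card_residues_le_card_filter_linDiffs y l)
  rw [Finset.card_range, hdiff, card_filter_not_dvd_mset3 (by omega) hxy] at hcount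
  omega
end
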